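/- arXiv:1905.08448 — 4 statements merged into one kernel-verified Lean document; each statement's English description precedes it below -/
import Mathlib

section
/- Let a ∈ (ℝ>0)^l and let A = ∑_i a_i. Then the l×l matrix H with entries H(i,i) = 1/a_i − 1/A and H(i,j) = −1/A for i ≠ j is positive semidefinite. -/
/-- The Hessian matrix `H(i,i) = 1/aᵢ − 1/A`, `H(i,j) = −1/A` (i ≠ j) is PSD. -/
theorem stmt_2 (l : ℕ) (a : Fin l → ℝ) (ha : ∀ i, 0 < a i) :
    (Matrix.of fun i j : Fin l =>
      if i = j then 1 / a i - 1 / (∑ k, a k) else -(1 / (∑ k, a k))).PosSemidef := by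
  set A : ℝ := ∑ k, a k with hA
  rw [Matrix.posSemidef_iff_dotProduct_mulVec]
  constructor
  · ext i j
    simp only [Matrix.conjTranspose_apply, Matrix.of_apply, star_trivial]
    by_cases h : i = j
    · subst h; simp
    · simp [h, Ne.symm h]
  · intro x
    have key : dotProduct (star x) ((Matrix.of fun i j : Fin l =>
        if i = j then 1 / a i - 1 / A else -(1 / A)).mulVec x)
        = (∑ i, x i ^ 2 / a i) - (∑ i, x i) ^ 2 / A := by
      simp only [dotProduct, Matrix.mulVec, star_trivial, Matrix.of_apply]
      have h1 : ∀ i : Fin l, (∑ j, (if i = j then 1 / a i - 1 / A else -(1 / A)) * x j)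
          = x i / a i - (∑ j, x j) / A := by
        intro i
        have h2 : ∀ j : Fin l, (if i = j then 1 / a i - 1 / A else -(1 / A)) * x j
            = (if i = j then x j / a i else 0) - x j / A := by
          intro j; split <;> ring
        rw [Finset.sum_congr rfl fun j _ => h2 j, Finset.sum_sub_distrib,
          Finset.sum_ite_eq Finset.univ i (fun j => x j / a i)]
        simp [Finset.sum_div]
      calc ∑ i, x i * ∑ j, (if i = j then 1 / a i - 1 / A else -(1 / A)) * x j
          = ∑ i, x i * (x i / a i - (∑ j, x j) / A) := by
            exact Finset.sum_congr rfl fun i _ => by rw [h1 i]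
        _ = ∑ i, (x i ^ 2 / a i - x i * ((∑ j, x j) / A)) := by
            exact Finset.sum_congr rfl fun i _ => by ring
        _ = (∑ i, x i ^ 2 / a i) - (∑ i, x i) ^ 2 / A := by
            rw [Finset.sum_sub_distrib, ← Finset.sum_mul]; ring
    rw [key]
    rcases Nat.eq_zero_or_pos l with hl | hl
    · subst hl; simp
    have hApos : 0 < A := Finset.sum_pos (fun i _ => ha i)
      (Finset.univ_nonempty_iff.mpr (Fin.pos_iff_nonempty.mp hl))
    have cs : (∑ i, x i) ^ 2 ≤ A * (∑ i, x i ^ 2 / a i) := by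
      refine Finset.sum_sq_le_sum_mul_sum_of_sq_eq_mul Finset.univ
        (fun i _ => (ha i).le) (fun i _ => div_nonneg (sq_nonneg _) (ha i).le) ?_
      intro i _
      rw [mul_div_cancel₀ _ (ha i).ne']
    rw [sub_nonneg, div_le_iff₀ hApos]
    nlinarith [cs]
end

section
/- Let b₁, b₂ be positive integers and ζ ∈ (ℝ>0)^{b₁}. Consider the (b₂+1)×(b₂+1) symmetric matrix B with block form: top-left block b₁·I_{b₂} (b₂×b₂ identity scaled by b₁), top-right column ‖ζ‖₁·𝟙_{b₂}, bottom-left row ‖ζ‖₁·𝟙_{b₂}ᵀ, and bottom-right scalar entry (b₂+1)·‖ζ‖₂². Then the eigenvalues of B are: b₁ (with multiplicity b₂−1), and the two values ((b₁ + (b₂+1)‖ζ‖₂²)/2)·(1 ± √(1 − (4b₁(b₂+1)‖ζ‖₂² − 4b₂‖ζ‖₁²)/(b₁ + (b₂+1)‖ζ‖₂²)²)). -/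
open Polynomial in
/-- Eigenvalues of `B = AAᵀ` for the PML constraint matrix: the characteristic polynomial is
`(X − b₁)^{b₂−1} (X − λ₊)(X − λ₋)` with
`λ± = ((b₁ + (b₂+1)‖ζ‖₂²)/2)(1 ± √(1 − (4b₁(b₂+1)‖ζ‖₂² − 4b₂‖ζ‖₁²)/(b₁+(b₂+1)‖ζ‖₂²)²))`. -/
theorem stmt_11 (b₁ b₂ : ℕ) (hb₁ : 0 < b₁) (hb₂ : 0 < b₂)
    (ζ : Fin b₁ → ℝ) (hζ : ∀ i, 0 < ζ i) :
    (Matrix.fromBlocks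
        ((b₁ : ℝ) • (1 : Matrix (Fin b₂) (Fin b₂) ℝ))
        (Matrix.of fun (_ : Fin b₂) (_ : Unit) => ∑ i, ζ i)
        (Matrix.of fun (_ : Unit) (_ : Fin b₂) => ∑ i, ζ i)
        (Matrix.of fun (_ _ : Unit) => ((b₂ : ℝ) + 1) * ∑ i, ζ i ^ 2)).charpoly =
      (X - C (b₁ : ℝ)) ^ (b₂ - 1) *
        (X - C (((b₁ : ℝ) + ((b₂ : ℝ) + 1) * ∑ i, ζ i ^ 2) / 2 *
          (1 + Real.sqrt (1 -
            (4 * (b₁ : ℝ) * ((b₂ : ℝ) + 1) * (∑ i, ζ i ^ 2) - 4 * (b₂ : ℝ) * (∑ i, ζ i) ^ 2) /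
              ((b₁ : ℝ) + ((b₂ : ℝ) + 1) * ∑ i, ζ i ^ 2) ^ 2)))) *
        (X - C (((b₁ : ℝ) + ((b₂ : ℝ) + 1) * ∑ i, ζ i ^ 2) / 2 *
          (1 - Real.sqrt (1 -
            (4 * (b₁ : ℝ) * ((b₂ : ℝ) + 1) * (∑ i, ζ i ^ 2) - 4 * (b₂ : ℝ) * (∑ i, ζ i) ^ 2) /
              ((b₁ : ℝ) + ((b₂ : ℝ) + 1) * ∑ i, ζ i ^ 2) ^ 2)))) := by
  open Matrix in
  set P : ℝ := (b₁ : ℝ) with hP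
  set s : ℝ := ∑ i, ζ i with hs
  set q : ℝ := ∑ i, ζ i ^ 2 with hq
  set T : ℝ := ((b₂ : ℝ) + 1) * q with hT
  have hq0 : 0 ≤ q := Finset.sum_nonneg fun i _ => sq_nonneg _
  have hT0 : 0 ≤ T := by positivity
  have hP1 : (1 : ℝ) ≤ P := by rw [hP]; exact_mod_cast hb₁
  have hPT : 0 < P + T := by linarith
  have hPTne : P + T ≠ 0 := hPT.ne'
  set u : ℝ := (4 * P * ((b₂ : ℝ) + 1) * q - 4 * (b₂ : ℝ) * s ^ 2) / (P + T) ^ 2 with hu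
  set r : ℝ := Real.sqrt (1 - u) with hr
  have hrad : 1 - u = ((P - T) ^ 2 + 4 * (b₂ : ℝ) * s ^ 2) / (P + T) ^ 2 := by
    rw [hu, hT]; field_simp; ring
  have hrad0 : 0 ≤ 1 - u := by
    rw [hrad]; positivity
  have hr2 : r ^ 2 = 1 - u := Real.sq_sqrt hrad0
  set lp : ℝ := (P + T) / 2 * (1 + r) with hlp
  set lm : ℝ := (P + T) / 2 * (1 - r) with hlm
  have hsum : lp + lm = P + T := by rw [hlp, hlm]; ring
  have hprod : lp * lm = P * T - (b₂ : ℝ) * s ^ 2 := by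
    have : lp * lm = ((P + T) / 2) ^ 2 * (1 - r ^ 2) := by rw [hlp, hlm]; ring
    rw [this, hr2, sub_sub_cancel, hu, hT]
    field_simp
    ring
  apply Polynomial.eq_of_infinite_eval_eq
  apply Set.Infinite.mono (s := {P}ᶜ)
  · intro x hx
    have hxP : x - P ≠ 0 := sub_ne_zero.mpr hx
    simp only [Set.mem_setOf_eq]
    -- evaluate RHS
    rw [eval_mul, eval_mul, eval_pow, eval_sub, eval_sub, eval_sub, eval_X, eval_C, eval_C, eval_C]
    -- evaluate LHS
    rw [Matrix.charpoly, ← coe_evalRingHom, RingHom.map_det]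
    have hmap : (Matrix.charmatrix (Matrix.fromBlocks
        (P • (1 : Matrix (Fin b₂) (Fin b₂) ℝ))
        (Matrix.of fun (_ : Fin b₂) (_ : Unit) => s)
        (Matrix.of fun (_ : Unit) (_ : Fin b₂) => s)
        (Matrix.of fun (_ _ : Unit) => T))).map (evalRingHom x) =
        Matrix.fromBlocks ((x - P) • (1 : Matrix (Fin b₂) (Fin b₂) ℝ))
          (Matrix.of fun (_ : Fin b₂) (_ : Unit) => -s)
          (Matrix.of fun (_ : Unit) (_ : Fin b₂) => -s)
          (Matrix.of fun (_ _ : Unit) => x - T) := by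
      ext i j
      cases i with
      | inl i => cases j with
        | inl j =>
          by_cases h : i = j
          · subst h
            simp [Matrix.charmatrix_apply, Matrix.fromBlocks, Matrix.one_apply,
              Matrix.diagonal, Matrix.map_apply]
          · simp [h, Matrix.charmatrix_apply, Matrix.fromBlocks, Matrix.one_apply,
              Matrix.diagonal, Matrix.map_apply]
        | inr j => simp [Matrix.charmatrix_apply, Matrix.fromBlocks, Matrix.map_apply, Matrix.diagonal]
      | inr i => cases j with
        | inl j => simp [Matrix.charmatrix_apply, Matrix.fromBlocks, Matrix.map_apply, Matrix.diagonal]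
        | inr j => simp [Matrix.charmatrix_apply, Matrix.fromBlocks, Matrix.map_apply, Matrix.diagonal]
    rw [RingHom.mapMatrix_apply, hmap]
    haveI : Invertible ((x - P) • (1 : Matrix (Fin b₂) (Fin b₂) ℝ)) :=
      ⟨(x - P)⁻¹ • (1 : Matrix (Fin b₂) (Fin b₂) ℝ),
        by simp only [smul_mul_assoc, Matrix.mul_smul, Matrix.one_mul, smul_smul]
           rw [inv_mul_cancel₀ hxP, one_smul],
        by simp only [smul_mul_assoc, Matrix.mul_smul, Matrix.one_mul, smul_smul]
           rw [mul_inv_cancel₀ hxP, one_smul]⟩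
    have hinv : ⅟((x - P) • (1 : Matrix (Fin b₂) (Fin b₂) ℝ)) =
        (x - P)⁻¹ • (1 : Matrix (Fin b₂) (Fin b₂) ℝ) := by
      apply invOf_eq_right_inv
      simp [smul_smul, mul_inv_cancel₀ hxP, inv_mul_cancel₀ hxP]
    rw [Matrix.det_fromBlocks₁₁, hinv]
    rw [Matrix.det_smul, Matrix.det_one, Fintype.card_fin, mul_one]
    rw [Matrix.det_unique]
    simp only [Matrix.sub_apply, Matrix.mul_apply, Matrix.smul_apply, Matrix.one_apply,
      Matrix.of_apply, smul_eq_mul, mul_ite, mul_one, mul_zero, Finset.sum_ite_eq',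
      Finset.mem_univ, if_true, Finset.sum_const, Finset.card_univ, Fintype.card_fin,
      nsmul_eq_mul]
    obtain ⟨k, rfl⟩ : ∃ k, b₂ = k + 1 := ⟨b₂ - 1, (Nat.succ_pred_eq_of_pos hb₂).symm⟩
    simp only [Nat.add_sub_cancel]
    have key : (x - lp) * (x - lm) = (x - P) * (x - T) - ((k : ℝ) + 1) * s ^ 2 := by
      have h1 : (x - lp) * (x - lm) = x ^ 2 - (lp + lm) * x + lp * lm := by ring
      rw [h1, hsum, hprod]; push_cast; ring
    conv_rhs => rw [mul_assoc, key]
    rw [pow_succ]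
    push_cast
    field_simp
  · exact (Set.finite_singleton P).infinite_compl
end

section
/- Let v₁,...,v_d ∈ ℝ^{b₁} have an invertible Gram matrix G. Then the smallest eigenvalue of G satisfies λ_min(G) ≥ 1 / (∑_{k=1}^{d} 1/‖ṽ_k‖₂²), where ṽ_k is the orthogonal projection of v_k onto the orthogonal complement of the span of the other d−1 vectors. -/
open scoped RealInnerProductSpace

/-- Smallest eigenvalue of an invertible Gram matrix `G` is at least
`1 / ∑ₖ 1/‖ṽₖ‖²`, where `ṽₖ` is the orthogonal projection of `vₖ` onto the orthogonal
complement of the span of the other vectors. -/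
theorem stmt_14 (b₁ d : ℕ) (v : Fin d → EuclideanSpace ℝ (Fin b₁))
    (G : Matrix (Fin d) (Fin d) ℝ)
    (hG : G = Matrix.of fun j k => (inner ℝ (v j) (v k) : ℝ))
    (hinv : IsUnit G.det)
    (μ : ℝ) (w : Fin d → ℝ) (hw : w ≠ 0) (hev : G.mulVec w = μ • w) :
    1 / (∑ k, 1 / ‖(Submodule.orthogonalProjectionOnto ((Submodule.span ℝ (v '' {j | j ≠ k}))ᗮ) (v k) :
        EuclideanSpace ℝ (Fin b₁))‖ ^ 2) ≤ μ := by
  classical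
  -- linear independence of v
  have hli : LinearIndependent ℝ v := by
    rw [Fintype.linearIndependent_iff]
    intro c hc
    have hGc : G.mulVec c = 0 := by
      funext j
      have h0 : (inner ℝ (v j) (∑ l, c l • v l) : ℝ) = 0 := by rw [hc]; simp
      rw [inner_sum] at h0
      simp only [real_inner_smul_right] at h0
      simp only [Matrix.mulVec, dotProduct, hG, Matrix.of_apply, Pi.zero_apply]
      rw [← h0]
      exact Finset.sum_congr rfl fun l _ => mul_comm _ _
    have hc0 : c = 0 := by
      have h1 : G⁻¹.mulVec (G.mulVec c) = c := by
        rw [Matrix.mulVec_mulVec, Matrix.nonsing_inv_mul G hinv, Matrix.one_mulVec]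
      rw [hGc, Matrix.mulVec_zero] at h1
      exact h1.symm
    exact fun i => congrFun hc0 i
  set p : Fin d → EuclideanSpace ℝ (Fin b₁) := fun k =>
    (Submodule.orthogonalProjectionOnto ((Submodule.span ℝ (v '' {j | j ≠ k}))ᗮ) (v k) :
      EuclideanSpace ℝ (Fin b₁)) with hpdef
  show 1 / (∑ k, 1 / ‖p k‖ ^ 2) ≤ μ
  -- orthogonality facts
  have horth : ∀ k j, j ≠ k → ⟪p k, v j⟫ = 0 := by
    intro k j hj
    have hvj : v j ∈ Submodule.span ℝ (v '' {j | j ≠ k}) :=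
      Submodule.subset_span ⟨j, hj, rfl⟩
    exact Submodule.inner_left_of_mem_orthogonal hvj
      (Submodule.orthogonalProjectionOnto ((Submodule.span ℝ (v '' {j | j ≠ k}))ᗮ) (v k)).2
  have hself : ∀ k, ⟪p k, v k⟫ = ‖p k‖ ^ 2 := by
    intro k
    have h := Submodule.starProjection_inner_eq_zero (K := (Submodule.span ℝ (v '' {j | j ≠ k}))ᗮ)
      (v k) (p k) (Submodule.orthogonalProjectionOnto _ (v k)).2
    have : ⟪v k, p k⟫ - ⟪p k, p k⟫ = 0 := by
      rw [← inner_sub_left]; exact h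
    have h2 : ⟪p k, v k⟫ = ⟪p k, p k⟫ := by
      rw [real_inner_comm]; linarith
    rw [h2, real_inner_self_eq_norm_sq]
  have hpne : ∀ k, ‖p k‖ ^ 2 ≠ 0 := by
    intro k hk
    have hk0 : p k = 0 := by
      have := pow_eq_zero_iff (n := 2) (by norm_num) |>.mp hk
      exact norm_eq_zero.mp this
    have hmem : v k ∈ ((Submodule.span ℝ (v '' {j | j ≠ k}))ᗮ)ᗮ := by
      rw [← Submodule.orthogonalProjectionOnto_eq_zero_iff]
      exact Subtype.ext hk0
    rw [Submodule.orthogonal_orthogonal] at hmem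
    exact hli.notMem_span_image (by simp : k ∉ {j | j ≠ k}) hmem
  have hpsq : ∀ k, 0 < ‖p k‖ ^ 2 := fun k =>
    lt_of_le_of_ne (sq_nonneg _) (Ne.symm (hpne k))
  -- the vector u = ∑ w j • v j
  set u : EuclideanSpace ℝ (Fin b₁) := ∑ j, w j • v j with hudef
  have hinner_u : ∀ j, ⟪v j, u⟫ = μ * w j := by
    intro j
    have h := congrFun hev j
    simp only [Matrix.mulVec, dotProduct, hG, Matrix.of_apply, Pi.smul_apply,
      smul_eq_mul] at h
    rw [hudef, inner_sum]
    simp only [real_inner_smul_right]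
    rw [← h]
    exact Finset.sum_congr rfl fun l _ => mul_comm _ _
  have huu : ⟪u, u⟫ = μ * ∑ j, w j ^ 2 := by
    nth_rewrite 1 [hudef]
    rw [sum_inner]
    simp only [real_inner_smul_left, hinner_u]
    rw [Finset.mul_sum]
    exact Finset.sum_congr rfl fun j _ => by ring
  have hpu : ∀ k, ⟪p k, u⟫ = w k * ‖p k‖ ^ 2 := by
    intro k
    rw [hudef, inner_sum]
    simp only [real_inner_smul_right]
    rw [Finset.sum_eq_single k]
    · rw [hself]
    · intro j _ hj; rw [horth k j hj, mul_zero]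
    · intro h; exact absurd (Finset.mem_univ k) h
  have hCS : ∀ k, w k ^ 2 ≤ ⟪u, u⟫ * (1 / ‖p k‖ ^ 2) := by
    intro k
    have h := real_inner_mul_inner_self_le (p k) u
    rw [hpu, real_inner_self_eq_norm_sq] at h
    have hp2 := hpsq k
    rw [mul_one_div, le_div_iff₀ hp2]
    nlinarith [h]
  -- summation
  obtain ⟨i, hi⟩ : ∃ i, w i ≠ 0 := by
    by_contra h
    push_neg at h
    exact hw (funext h)
  have hS : 0 < ∑ j, w j ^ 2 :=
    Finset.sum_pos' (fun j _ => sq_nonneg _) ⟨i, Finset.mem_univ i, by positivity⟩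
  have hT : 0 < ∑ k, 1 / ‖p k‖ ^ 2 :=
    Finset.sum_pos (fun k _ => one_div_pos.mpr (hpsq k)) ⟨i, Finset.mem_univ i⟩
  have hsum : ∑ j, w j ^ 2 ≤ ⟪u, u⟫ * ∑ k, 1 / ‖p k‖ ^ 2 := by
    rw [Finset.mul_sum]
    exact Finset.sum_le_sum fun k _ => hCS k
  rw [huu] at hsum
  have h1 : 1 ≤ μ * ∑ k, 1 / ‖p k‖ ^ 2 := by
    have := hsum
    nlinarith
  rw [div_le_iff₀ hT]
  linarith
end

section
/- Let ζ₁,...,ζ_{b₁} ∈ (ℝ>0)^d, let m_j ∈ (ℝ≥0)^d for j = 1,...,b₂, and let X', X ∈ (ℝ≥0)^{b₁×b₂} with X_{ij} ≤ X'_{ij} for all i,j. For each j with δ_j := ∑_i (X'_{ij} − X_{ij}) > 0 define the convex combination ζ̄_j = (∑_i (X'_{ij} − X_{ij})·ζ_i)/δ_j. Then ∏_{i=1}^{b₁} ∏_{k=1}^{d} ζ_i(k)^{∑_j m_j(k) X'_{ij}} ≤ (∏_{i,k} ζ_i(k)^{∑_j m_j(k) X_{ij}}) · ∏_{j: δ_j>0}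 ∏_{k=1}^{d} ζ̄_j(k)^{m_j(k)·δ_j}. -/
/-!
Split each exponent `∑ⱼ mⱼ(k) X'ᵢⱼ` as `∑ⱼ mⱼ(k) Xᵢⱼ + ∑ⱼ mⱼ(k) (X'ᵢⱼ - Xᵢⱼ)`. The first part gives the
first factor of the bound; the second part, regrouped by `j` and `k`, is `∏ᵢ ζᵢ(k) ^ (mⱼ(k) δᵢⱼ)`,
a weighted geometric mean raised to the power `mⱼ(k) δⱼ`, which the weighted AM-GM inequality bounds
by `ζ̄ⱼ(k) ^ (mⱼ(k) δⱼ)`. Columns with `δⱼ = 0` have all weights zero and contribute `1`.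
-/

open Finset

namespace Real

variable {ι : Type*} {s : Finset ι} {w z : ι → ℝ}

theorem prod_rpow_le_weightedMean_rpow (hw : ∀ i ∈ s, 0 ≤ w i) (hw' : 0 < ∑ i ∈ s, w i)
    (hz : ∀ i ∈ s, 0 ≤ z i) :
    ∏ i ∈ s, z i ^ w i ≤ ((∑ i ∈ s, w i * z i) / ∑ i ∈ s, w i) ^ ∑ i ∈ s, w i := by
  have hprod : 0 ≤ ∏ i ∈ s, z i ^ w i := prod_nonneg fun i hi => rpow_nonneg (hz i hi) _
  have amgm := geom_mean_le_arith_mean s w z hw hw' hz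
  calc ∏ i ∈ s, z i ^ w i
      = ((∏ i ∈ s, z i ^ w i) ^ (∑ i ∈ s, w i)⁻¹) ^ ∑ i ∈ s, w i := by
        rw [← rpow_mul hprod, inv_mul_cancel₀ hw'.ne', rpow_one]
    _ ≤ _ := rpow_le_rpow (rpow_nonneg hprod _) amgm hw'.le

theorem prod_rpow_mul_le_weightedMean_rpow_mul {c : ℝ} (hc : 0 ≤ c) (hw : ∀ i ∈ s, 0 ≤ w i)
    (hw' : 0 < ∑ i ∈ s, w i) (hz : ∀ i ∈ s, 0 ≤ z i) :
    ∏ i ∈ s, z i ^ (c * w i) ≤ ((∑ i ∈ s, w i * z i) / ∑ i ∈ s, w i) ^ (c * ∑ i ∈ s, w i) := by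
  have hmean : 0 ≤ (∑ i ∈ s, w i * z i) / ∑ i ∈ s, w i :=
    div_nonneg (sum_nonneg fun i hi => mul_nonneg (hw i hi) (hz i hi)) hw'.le
  calc ∏ i ∈ s, z i ^ (c * w i)
      = (∏ i ∈ s, z i ^ w i) ^ c := by
        rw [← finsetProd_rpow _ _ fun i hi => rpow_nonneg (hz i hi) _]
        exact prod_congr rfl fun i hi => by rw [← rpow_mul (hz i hi), mul_comm]
    _ ≤ (((∑ i ∈ s, w i * z i) / ∑ i ∈ s, w i) ^ ∑ i ∈ s, w i) ^ c :=
        rpow_le_rpow (prod_nonneg fun i hi => rpow_nonneg (hz i hi) _)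
          (prod_rpow_le_weightedMean_rpow hw hw' hz) hc
    _ = _ := by rw [← rpow_mul hmean, mul_comm]

theorem prod_prod_rpow_sum {ι κ J : Type*} [Fintype ι] [Fintype κ] [Fintype J]
    {ζ : ι → κ → ℝ} (hζ : ∀ i k, 0 < ζ i k) (e : ι → κ → J → ℝ) :
    ∏ i, ∏ k, ζ i k ^ (∑ j, e i k j) = ∏ j, ∏ k, ∏ i, ζ i k ^ e i k j := by
  simp_rw [rpow_sum_of_pos (hζ _ _)]
  rw [prod_comm]
  simp_rw [prod_comm (γ := ι)]
  rw [prod_comm]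

end Real

open Real

theorem stmt_15_general (b₁ b₂ d : ℕ) (ζ : Fin b₁ → Fin d → ℝ) (hζ : ∀ i k, 0 < ζ i k)
    (m : Fin b₂ → Fin d → ℝ) (hm : ∀ j k, 0 ≤ m j k)
    (X X' : Fin b₁ → Fin b₂ → ℝ) (hXX' : ∀ i j, X i j ≤ X' i j) :
    (∏ i, ∏ k, ζ i k ^ (∑ j, m j k * X' i j)) ≤
      (∏ i, ∏ k, ζ i k ^ (∑ j, m j k * X i j)) *
        ∏ j ∈ Finset.univ.filter (fun j => 0 < ∑ i, (X' i j - X i j)), ∏ k,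
          ((∑ i, (X' i j - X i j) * ζ i k) / (∑ i, (X' i j - X i j))) ^
            (m j k * ∑ i, (X' i j - X i j)) := by
  have hδ : ∀ i j, 0 ≤ X' i j - X i j := fun i j => sub_nonneg.2 (hXX' i j)
  have split : ∀ i k, ζ i k ^ (∑ j, m j k * X' i j)
      = ζ i k ^ (∑ j, m j k * X i j) * ζ i k ^ (∑ j, m j k * (X' i j - X i j)) := fun i k => by
    rw [← rpow_add (hζ i k), ← sum_add_distrib]
    exact congrArg _ (sum_congr rfl fun j _ => by ring)
  have column_pos_of_ne_one : ∀ j, ∏ k, ∏ i, ζ i k ^ (m j k * (X' i j - X i j)) ≠ 1 →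
      0 < ∑ i, (X' i j - X i j) := fun j hne => by
    contrapose! hne
    have hzero := (sum_eq_zero_iff_of_nonneg fun i _ => hδ i j).1
      (hne.antisymm (sum_nonneg fun i _ => hδ i j))
    simp [hzero]
  simp_rw [split, prod_mul_distrib]
  rw [prod_prod_rpow_sum hζ fun i k j => m j k * (X' i j - X i j),
    ← prod_filter_of_ne fun j _ => column_pos_of_ne_one j]
  have hpow : ∀ i k (e : ℝ), 0 ≤ ζ i k ^ e := fun i k e => (rpow_pos_of_pos (hζ i k) e).le
  refine mul_le_mul_of_nonneg_left
    (prod_le_prod (fun j _ => prod_nonneg fun k _ => prod_nonneg fun i _ => hpow i k _)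
      fun j hj => prod_le_prod (fun k _ => prod_nonneg fun i _ => hpow i k _) fun k _ => ?_)
    (prod_nonneg fun i _ => prod_nonneg fun k _ => hpow i k _)
  exact prod_rpow_mul_le_weightedMean_rpow_mul (hm j k) (fun i _ => hδ i j)
    (mem_filter.1 hj).2 fun i _ => (hζ i k).le

/-- AM–GM rounding inequality: rounding `X'` down to `X` and redistributing the mass onto
the convex-combination level sets `ζ̄ⱼ` only increases the probability term. -/
theorem stmt_15 (b₁ b₂ d : ℕ) (ζ : Fin b₁ → Fin d → ℝ) (hζ : ∀ i k, 0 < ζ i k)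
    (m : Fin b₂ → Fin d → ℝ) (hm : ∀ j k, 0 ≤ m j k)
    (X X' : Fin b₁ → Fin b₂ → ℝ) (hX : ∀ i j, 0 ≤ X i j) (hXX' : ∀ i j, X i j ≤ X' i j) :
    (∏ i, ∏ k, ζ i k ^ (∑ j, m j k * X' i j)) ≤
      (∏ i, ∏ k, ζ i k ^ (∑ j, m j k * X i j)) *
        ∏ j ∈ Finset.univ.filter (fun j => 0 < ∑ i, (X' i j - X i j)), ∏ k,
          ((∑ i, (X' i j - X i j) * ζ i k) / (∑ i, (X' i j - X i j))) ^
            (m j k * ∑ i, (X' i j - X i j)) :=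
  stmt_15_general b₁ b₂ d ζ hζ m hm X X' hXX'
end
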